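/- arXiv:2512.15018 — 9 statements merged into one kernel-verified Lean document; each statement's English description precedes it below -/
import Mathlib

section
/- For every q with 1 < q ≤ 2, the function h_q: [0,1] → ℝ defined by h_q(t) = (1 - ((1+√(1-t))/2)^q - ((1-√(1-t))/2)^q)^{1/q} is monotonically increasing on [0,1]. -/
/-!
Write `h q t = (1 - S (√(1 - t)))^(1/q)` with `S s = ((1 + s)/2)^q + ((1 - s)/2)^q`, the `q`-th power
sum of the two-point distribution `((1 + s)/2, (1 - s)/2)`. Since `x ↦ x^q` is convex for `q ≥ 1`,
`S` increases as the two points `1/2 ∓ s/2` spread apart, and `S ≤ 1` because `x^q ≤ x` on `[0, 1]`.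
As `t` increases, `√(1 - t)` decreases, hence so does `S (√(1 - t))`, and `h q t` increases.
-/

noncomputable def h (q t : ℝ) : ℝ :=
  (1 - ((1 + Real.sqrt (1 - t)) / 2) ^ q - ((1 - Real.sqrt (1 - t)) / 2) ^ q) ^ (1 / q)

open Real Set

theorem ConvexOn.map_sub_add_map_add_le {s : Set ℝ} {g : ℝ → ℝ} (hg : ConvexOn ℝ s g)
    {c r ρ : ℝ} (hr : 0 ≤ r) (hrρ : r ≤ ρ) (hl : c - ρ ∈ s) (hu : c + ρ ∈ s) :
    g (c - r) + g (c + r) ≤ g (c - ρ) + g (c + ρ) := by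
  obtain rfl | hρ := (hr.trans hrρ).eq_or_lt
  · rw [le_antisymm hrρ hr]
  -- `c ∓ r` are the convex combinations of `c - ρ, c + ρ` with the weights `a, b` swapped.
  set a := (ρ + r) / (2 * ρ)
  set b := (ρ - r) / (2 * ρ)
  have ha : 0 ≤ a := by positivity
  have hb : 0 ≤ b := div_nonneg (by linarith) (by positivity)
  have hab : a + b = 1 := by simp only [a, b]; field_simp; ring
  have hsub : a * (c - ρ) + b * (c + ρ) = c - r := by simp only [a, b]; field_simp; ring
  have hadd : b * (c - ρ) + a * (c + ρ) = c + r := by simp only [a, b]; field_simp; ring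
  have h₁ := hg.2 hl hu ha hb hab
  have h₂ := hg.2 hl hu hb ha (by rwa [add_comm])
  simp only [smul_eq_mul, hsub, hadd] at h₁ h₂
  linear_combination h₁ + h₂ + (g (c - ρ) + g (c + ρ)) * hab

noncomputable def binaryPowerSum (q s : ℝ) : ℝ :=
  ((1 + s) / 2) ^ q + ((1 - s) / 2) ^ q

theorem binaryPowerSum_le_one {q s : ℝ} (hq : 1 ≤ q) (hs : s ∈ Icc (0 : ℝ) 1) :
    binaryPowerSum q s ≤ 1 := by
  obtain ⟨hs₀, hs₁⟩ := hs
  have hplus := rpow_le_self_of_le_one (x := (1 + s) / 2) (by linarith) (by linarith) hq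
  have hminus := rpow_le_self_of_le_one (x := (1 - s) / 2) (by linarith) (by linarith) hq
  rw [binaryPowerSum]
  linarith

theorem monotoneOn_binaryPowerSum {q : ℝ} (hq : 1 ≤ q) :
    MonotoneOn (binaryPowerSum q) (Icc 0 1) := by
  intro s ⟨hs₀, _⟩ t ⟨_, ht₁⟩ hst
  have key := (convexOn_rpow hq).map_sub_add_map_add_le (c := 1 / 2) (r := s / 2) (ρ := t / 2)
    (by positivity) (by linarith) (by rw [mem_Ici]; linarith) (by rw [mem_Ici]; linarith)
  simp only [binaryPowerSum]
  ring_nf at key ⊢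
  linarith

theorem sqrt_one_sub_mem_Icc {t : ℝ} (ht : t ∈ Icc (0 : ℝ) 1) : √(1 - t) ∈ Icc (0 : ℝ) 1 :=
  ⟨sqrt_nonneg _, sqrt_le_one.mpr (by linarith [ht.1])⟩

theorem h_monotone_general (q : ℝ) (hq1 : 1 < q) :
    MonotoneOn (h q) (Set.Icc (0:ℝ) 1) := by
  intro t ht u hu htu
  have hS : binaryPowerSum q √(1 - u) ≤ binaryPowerSum q √(1 - t) :=
    monotoneOn_binaryPowerSum hq1.le (sqrt_one_sub_mem_Icc hu) (sqrt_one_sub_mem_Icc ht)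
      (sqrt_le_sqrt (by linarith))
  have hS_le := binaryPowerSum_le_one hq1.le (sqrt_one_sub_mem_Icc ht)
  simp only [binaryPowerSum] at hS hS_le
  exact rpow_le_rpow (by linarith) (by linarith) (by positivity)

theorem h_monotone (q : ℝ) (hq1 : 1 < q) (hq2 : q ≤ 2) :
    MonotoneOn (h q) (Set.Icc (0:ℝ) 1) :=
  h_monotone_general q hq1
end

section
/- For every q with 1 < q ≤ 2, the function h_q(t) = (1 - ((1+√(1-t))/2)^q - ((1-√(1-t))/2)^q)^{1/q} is concave on the interval [0,1]. -/
/-!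
By definition `h q t = hBase q t ^ (1 / q)` with `hBase q t = 1 - a ^ q - b ^ q`, where
`a, b = (1 ± s) / 2` and `s = √(1 - t)`. As `x ↦ x ^ (1 / q)` is concave and monotone on `[0, ∞)`
and `hBase q ≥ 0`, it suffices that `hBase q` is concave. Its derivative is
`q / 4 * (a ^ p - b ^ p) / s` with `p = q - 1 ∈ (0, 1]`, and the symmetric slope
`(a ^ p - b ^ p) / s` is increasing in `s`: its derivative has the sign of the trapezoid-rule error `p s (a ^ (p - 1) + b ^ (p - 1)) - 2 (a ^ p - b ^ p)`
for the convex function `x ↦ x ^ (p - 1)`, which vanishes at `s = 0` and has derivative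
`p (p - 1) s / 2 * (a ^ (p - 2) - b ^ (p - 2)) ≥ 0`. Since `s` decreases in `t`, the derivative
of `hBase q` is antitone.
-/

open Real Set

lemma hasDerivAt_one_add_div_two_rpow (p x : ℝ) (hx : -1 < x) :
    HasDerivAt (fun y : ℝ => ((1 + y) / 2) ^ p) (p / 2 * ((1 + x) / 2) ^ (p - 1)) x := by
  convert (((hasDerivAt_id' x).const_add 1).div_const 2).rpow_const (p := p)
    (Or.inl (by linarith)) using 1
  ring

lemma hasDerivAt_one_sub_div_two_rpow (p x : ℝ) (hx : x < 1) :
    HasDerivAt (fun y : ℝ => ((1 - y) / 2) ^ p) (-(p / 2) * ((1 - x) / 2) ^ (p - 1)) x := by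
  convert (((hasDerivAt_id' x).const_sub 1).div_const 2).rpow_const (p := p)
    (Or.inl (by linarith)) using 1
  ring

lemma two_mul_rpow_sub_rpow_le_trapezoid {p s : ℝ} (hp0 : 0 ≤ p) (hp1 : p ≤ 1) (hs0 : 0 ≤ s)
    (hs1 : s < 1) :
    2 * (((1 + s) / 2) ^ p - ((1 - s) / 2) ^ p) ≤
      p * s * (((1 + s) / 2) ^ (p - 1) + ((1 - s) / 2) ^ (p - 1)) := by
  set N : ℝ → ℝ := fun x => p * x * (((1 + x) / 2) ^ (p - 1) + ((1 - x) / 2) ^ (p - 1)) -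
    2 * (((1 + x) / 2) ^ p - ((1 - x) / 2) ^ p)
  set N' : ℝ → ℝ := fun x =>
    p * (p - 1) * x / 2 * (((1 + x) / 2) ^ (p - 2) - ((1 - x) / 2) ^ (p - 2))
  have hN : ∀ x ∈ Ioo (-1 : ℝ) 1, HasDerivAt N (N' x) x := by
    rintro x ⟨hx1, hx2⟩
    refine ((((hasDerivAt_id' x).const_mul p).mul
      ((hasDerivAt_one_add_div_two_rpow (p - 1) x hx1).add
        (hasDerivAt_one_sub_div_two_rpow (p - 1) x hx2))).sub
      (((hasDerivAt_one_add_div_two_rpow p x hx1).sub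
        (hasDerivAt_one_sub_div_two_rpow p x hx2)).const_mul 2)).congr_deriv ?_
    simp only [N', Pi.add_apply, show p - 1 - 1 = p - 2 by ring]
    ring
  have hN'_nonneg : ∀ x ∈ Ioo (0 : ℝ) 1, 0 ≤ N' x := by
    rintro x ⟨hx0, hx1⟩
    have hpow : ((1 + x) / 2) ^ (p - 2) ≤ ((1 - x) / 2) ^ (p - 2) :=
      rpow_le_rpow_of_nonpos (by linarith) (by linarith) (by linarith)
    have hcoeff : p * (p - 1) * x / 2 ≤ 0 := by
      have : p * (p - 1) ≤ 0 := mul_nonpos_of_nonneg_of_nonpos hp0 (by linarith)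
      have := mul_nonpos_of_nonpos_of_nonneg this hx0.le
      linarith
    exact mul_nonneg_of_nonpos_of_nonpos hcoeff (by linarith)
  have hmono : MonotoneOn N (Ico 0 1) := by
    refine monotoneOn_of_hasDerivWithinAt_nonneg (convex_Ico 0 1) (f' := N')
      (fun x hx => (hN x ⟨by linarith [hx.1], hx.2⟩).continuousAt.continuousWithinAt)
      (fun x hx => ?_) (fun x hx => ?_) <;> rw [interior_Ico] at hx
    · exact (hN x ⟨by linarith [hx.1], hx.2⟩).hasDerivWithinAt
    · exact hN'_nonneg x hx
  have hN0 : N 0 = 0 := by simp [N]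
  have := hmono ⟨le_rfl, zero_lt_one⟩ ⟨hs0, hs1⟩ hs0
  rw [hN0] at this
  linarith

noncomputable def powSymmSlope (p s : ℝ) : ℝ := (((1 + s) / 2) ^ p - ((1 - s) / 2) ^ p) / s

lemma powSymmSlope_monotoneOn {p : ℝ} (hp0 : 0 ≤ p) (hp1 : p ≤ 1) :
    MonotoneOn (powSymmSlope p) (Ioo 0 1) := by
  set slope' : ℝ → ℝ := fun s => (p * s * (((1 + s) / 2) ^ (p - 1) + ((1 - s) / 2) ^ (p - 1)) -
    2 * (((1 + s) / 2) ^ p - ((1 - s) / 2) ^ p)) / (2 * s ^ 2)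
  have hderiv : ∀ s ∈ Ioo (0 : ℝ) 1, HasDerivAt (powSymmSlope p) (slope' s) s := fun s hs =>
    (((hasDerivAt_one_add_div_two_rpow p s (by linarith [hs.1])).sub
      (hasDerivAt_one_sub_div_two_rpow p s hs.2)).div (hasDerivAt_id' s) hs.1.ne').congr_deriv
      (by simp only [slope', Pi.sub_apply]; field_simp; ring)
  refine monotoneOn_of_hasDerivWithinAt_nonneg (convex_Ioo 0 1) (f' := slope')
    (fun s hs => (hderiv s hs).continuousAt.continuousWithinAt) (fun s hs => ?_) (fun s hs => ?_)
    <;> rw [interior_Ioo] at hs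
  · rw [interior_Ioo]
    exact (hderiv s hs).hasDerivWithinAt
  · exact div_nonneg (sub_nonneg.2 (two_mul_rpow_sub_rpow_le_trapezoid hp0 hp1 hs.1.le hs.2))
      (by positivity)

noncomputable def hBase (q t : ℝ) : ℝ :=
  1 - ((1 + √(1 - t)) / 2) ^ q - ((1 - √(1 - t)) / 2) ^ q

lemma hasDerivAt_hBase (q : ℝ) {t : ℝ} (ht : t ∈ Ioo (0 : ℝ) 1) :
    HasDerivAt (hBase q) (q / 4 * powSymmSlope (q - 1) (√(1 - t))) t := by
  have hs0 : 0 < √(1 - t) := sqrt_pos.2 (by linarith [ht.2])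
  have hs1 : √(1 - t) < 1 := by rw [sqrt_lt' one_pos]; linarith [ht.1]
  have hsqrt : HasDerivAt (fun x => √(1 - x)) (-1 / (2 * √(1 - t))) t :=
    ((hasDerivAt_id' t).const_sub 1).sqrt (by linarith [ht.2])
  refine ((((hasDerivAt_one_add_div_two_rpow q _ (by linarith)).comp t hsqrt).const_sub 1).sub
    ((hasDerivAt_one_sub_div_two_rpow q _ hs1).comp t hsqrt)).congr_deriv ?_
  unfold powSymmSlope
  field_simp
  ring

lemma concaveOn_hBase {q : ℝ} (hq1 : 1 ≤ q) (hq2 : q ≤ 2) :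
    ConcaveOn ℝ (Icc 0 1) (hBase q) := by
  have hcont : ContinuousOn (hBase q) (Icc 0 1) := by
    have := continuous_rpow_const (q := q) (by linarith)
    unfold hBase
    fun_prop
  have hsqrt : AntitoneOn (fun t : ℝ => √(1 - t)) (Ioo 0 1) := fun x _ y _ hxy =>
    sqrt_le_sqrt (by linarith)
  have hmaps : MapsTo (fun t : ℝ => √(1 - t)) (Ioo 0 1) (Ioo 0 1) := fun t ht =>
    ⟨sqrt_pos.2 (by linarith [ht.2]), by rw [sqrt_lt' one_pos]; linarith [ht.1]⟩
  have hslope := (powSymmSlope_monotoneOn (p := q - 1) (by linarith) (by linarith)).comp_AntitoneOn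
    hsqrt hmaps
  refine AntitoneOn.concaveOn_of_deriv (convex_Icc 0 1) hcont ?_ ?_ <;> rw [interior_Icc]
  · exact fun t ht => (hasDerivAt_hBase q ht).differentiableAt.differentiableWithinAt
  · intro x hx y hy hxy
    rw [(hasDerivAt_hBase q hx).deriv, (hasDerivAt_hBase q hy).deriv]
    exact mul_le_mul_of_nonneg_left (hslope hx hy hxy) (by linarith)

lemma hBase_nonneg {q t : ℝ} (hq : 1 ≤ q) (ht : 0 ≤ t) : 0 ≤ hBase q t := by
  have hs0 := sqrt_nonneg (1 - t)
  have hs1 : √(1 - t) ≤ 1 := sqrt_le_one.2 (by linarith)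
  have hplus : ((1 + √(1 - t)) / 2) ^ q ≤ (1 + √(1 - t)) / 2 := by
    simpa using rpow_le_rpow_of_exponent_ge' (by positivity) (by linarith) zero_le_one hq
  have hminus : ((1 - √(1 - t)) / 2) ^ q ≤ (1 - √(1 - t)) / 2 := by
    simpa using rpow_le_rpow_of_exponent_ge' (by linarith) (by linarith) zero_le_one hq
  unfold hBase
  linarith

lemma ConcaveOn.rpow {E : Type*} [AddCommMonoid E] [SMul ℝ E] {s : Set E} {f : E → ℝ}
    (hf : ConcaveOn ℝ s f) (hf0 : ∀ x ∈ s, 0 ≤ f x) {p : ℝ} (hp0 : 0 ≤ p) (hp1 : p ≤ 1) :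
    ConcaveOn ℝ s fun x => f x ^ p := by
  refine ⟨hf.1, fun x hx y hy a b ha hb hab => ?_⟩
  have hfx := hf0 x hx
  have hfy := hf0 y hy
  calc a • f x ^ p + b • f y ^ p ≤ (a • f x + b • f y) ^ p :=
        (concaveOn_rpow hp0 hp1).2 hfx hfy ha hb hab
    _ ≤ f (a • x + b • y) ^ p :=
        rpow_le_rpow (by simp only [smul_eq_mul]; positivity) (hf.2 hx hy ha hb hab) hp0

theorem h_concave (q : ℝ) (hq1 : 1 < q) (hq2 : q ≤ 2) :
    ConcaveOn ℝ (Set.Icc (0:ℝ) 1) (h q) :=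
  (concaveOn_hBase hq1.le hq2).rpow (fun _ ht => hBase_nonneg hq1.le ht.1) (by positivity)
    ((div_le_one (by linarith)).2 hq1.le)
end

section
/- For every q with 1 < q ≤ 2, the function t ↦ h_q(t)² is convex on [0,1], where h_q(t) = (1 - ((1+√(1-t))/2)^q - ((1-√(1-t))/2)^q)^{1/q}. -/
/-!
Put `s = √(1 - t)`, `a = (1 + s) / 2` and `b = (1 - s) / 2`, so that `a + b = 1`, `a - b = s` and
`h q t ^ q = G := powGap q s`. By the chain rule the `t`-derivative of `h q t ^ 2` is
`derivSqH q s = G ^ (2/q - 1) * W / (2s)` with `W := powDiff q s = a^(q-1) - b^(q-1)`; as `s`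
decreases in `t`, convexity means that `derivSqH q` decreases on `(0, 1)`. Its logarithmic
derivative is `≤ 0` iff `G * T ≤ (2 - q) s W² / 2`, where `T` is the error of the trapezoid rule
for `∫_b^a (q-1) x^(q-2) dx = W`. With `p = q - 1` this is the product of two bounds valid for all
`0 < y ≤ x`, `T ≤ (1-p)(2-p)(x-y)²W / (8xy)` and `(2-p)(x-y)G ≤ 4xyW`, where now
`G = (x+y)^(p+1) - x^(p+1) - y^(p+1)` and `W = x^p - y^p`.
-/

open Real Set

theorem monotoneOn_of_hasDerivAt_of_nonneg {D : Set ℝ} (hD : Convex ℝ D) {f f' : ℝ → ℝ}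
    (hf : ∀ x ∈ D, HasDerivAt f (f' x) x) (hf'₀ : ∀ x ∈ interior D, 0 ≤ f' x) :
    MonotoneOn f D :=
  monotoneOn_of_hasDerivWithinAt_nonneg hD
    (fun x hx => (hf x hx).continuousAt.continuousWithinAt)
    (fun x hx => (hf x (interior_subset hx)).hasDerivWithinAt) hf'₀

section RpowInequalities

variable {p x y : ℝ}

theorem rpow_add_le_tangent (hp0 : 0 ≤ p) (hp1 : p ≤ 1) (hx : 0 < x) (hxy : 0 ≤ x + y) :
    (x + y) ^ p ≤ x ^ p + p * y * x ^ (p - 1) := by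
  have hyx : -1 ≤ y / x := by rw [le_div_iff₀ hx]; linarith
  calc (x + y) ^ p = x ^ p * (1 + y / x) ^ p := by
        rw [← mul_rpow hx.le (by linarith), mul_add, mul_div_cancel₀ _ hx.ne', mul_one]
    _ ≤ x ^ p * (1 + p * (y / x)) :=
        mul_le_mul_of_nonneg_left (rpow_one_add_le_one_add_mul_self hyx hp0 hp1) (by positivity)
    _ = x ^ p + p * y * x ^ (p - 1) := by
        rw [rpow_sub_one hx.ne']; field_simp

theorem trapezoid_rpow_error_le (hp0 : 0 ≤ p) (hp1 : p ≤ 1) (hy : 0 < y) (hyx : y ≤ x) :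
    p * (x - y) * (x ^ (p - 1) + y ^ (p - 1)) / 2 - (x ^ p - y ^ p) ≤
      (1 - p) * (2 - p) * (x - y) ^ 2 * (x ^ p - y ^ p) / (8 * x * y) := by
  have hx : 0 < x := hy.trans_le hyx
  -- the gap between the two sides is `∫_y^x c t^(p-3) ((x+y)t - 2xy)^2 dt = u x - u y`
  set c := p * (1 - p) * (2 - p) / (8 * x * y) with hc
  set u := fun t : ℝ => (1 - p) * (2 - p) * (x + y) ^ 2 / (8 * x * y) * t ^ p
    + p * (2 - p) * (x + y) / 2 * t ^ (p - 1) - p * (1 - p) * (x * y) / 2 * t ^ (p - 2) with hu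
  have hderiv : ∀ t ∈ Ici y,
      HasDerivAt u (c * (t ^ (p - 3) * ((x + y) * t - 2 * x * y) ^ 2)) t := by
    intro t ht
    have ht : 0 < t := hy.trans_le ht
    have hpow : ∀ r, HasDerivAt (fun v : ℝ => v ^ r) (r * t ^ (r - 1)) t :=
      fun r => hasDerivAt_rpow_const (Or.inl ht.ne')
    refine ((((hpow p).const_mul _).add ((hpow (p - 1)).const_mul _)).sub
      ((hpow (p - 2)).const_mul _)).congr_deriv ?_
    have e1 : t ^ (p - 1) = t ^ (p - 3) * t * t := by
      rw [← rpow_add_one ht.ne', ← rpow_add_one ht.ne']; ring_nf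
    have e2 : t ^ (p - 1 - 1) = t ^ (p - 3) * t := by
      rw [← rpow_add_one ht.ne']; ring_nf
    have e3 : t ^ (p - 2 - 1) = t ^ (p - 3) := by ring_nf
    rw [e1, e2, e3, hc]
    field_simp
    ring
  have hc0 : 0 ≤ c := by
    have : 0 ≤ p * (1 - p) * (2 - p) := by
      apply mul_nonneg (mul_nonneg hp0 _) <;> linarith
    positivity
  have hmono := monotoneOn_of_hasDerivAt_of_nonneg (convex_Ici y) hderiv
    (fun t ht => mul_nonneg hc0 (mul_nonneg (rpow_nonneg (hy.le.trans (interior_subset ht)) _)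
      (sq_nonneg _)))
  have key : u y ≤ u x := hmono self_mem_Ici hyx hyx
  have ex1 : x ^ (p - 1) = x ^ p / x := rpow_sub_one hx.ne' p
  have ey1 : y ^ (p - 1) = y ^ p / y := rpow_sub_one hy.ne' p
  have ex2 : x ^ (p - 2) = x ^ p / (x * x) := by
    rw [show p - 2 = p - 1 - 1 by ring, rpow_sub_one hx.ne', ex1, div_div]
  have ey2 : y ^ (p - 2) = y ^ p / (y * y) := by
    rw [show p - 2 = p - 1 - 1 by ring, rpow_sub_one hy.ne', ey1, div_div]
  simp only [hu, ex1, ey1, ex2, ey2] at key ⊢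
  rw [← sub_nonneg] at key ⊢
  convert key using 1
  field_simp
  ring

theorem hasDerivAt_add_const_rpow {c u : ℝ} (r : ℝ) (h : 0 < u + c) :
    HasDerivAt (fun v => (v + c) ^ r) (r * (u + c) ^ (r - 1)) u := by
  simpa using ((hasDerivAt_id' u).add_const c).rpow_const (p := r) (Or.inl h.ne')

theorem hasDerivAt_rpow_succ_gap {u : ℝ} (hu : 0 < u) (huy : 0 < u + y) :
    HasDerivAt (fun v => (v + y) ^ (p + 1) - v ^ (p + 1) - y ^ (p + 1))
      ((p + 1) * ((u + y) ^ p - u ^ p)) u :=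
  (((hasDerivAt_add_const_rpow (p + 1) huy).sub (hasDerivAt_rpow_const (Or.inl hu.ne'))).sub_const
    _).congr_deriv (by simp only [add_sub_cancel_right]; ring)

theorem two_rpow_le_one_add (hp0 : 0 ≤ p) (hp1 : p ≤ 1) : (2 : ℝ) ^ p ≤ 1 + p := by
  have h := rpow_one_add_le_one_add_mul_self (by norm_num : (-1 : ℝ) ≤ 1) hp0 hp1
  rwa [one_add_one_eq_two, mul_one] at h

theorem deriv_rpow_succ_gap_le (hp0 : 0 ≤ p) (hp1 : p ≤ 1) (hy : 0 < y) (hyx : y ≤ x) :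
    (2 - p) * (((x + y) ^ (p + 1) - x ^ (p + 1) - y ^ (p + 1))
      + (p + 1) * (x - y) * ((x + y) ^ p - x ^ p)) ≤
      4 * (p + 1) * y * x ^ p - 4 * y ^ (p + 1) := by
  set f := fun u : ℝ => 4 * (p + 1) * y * u ^ p - 4 * y ^ (p + 1)
    - (2 - p) * (((u + y) ^ (p + 1) - u ^ (p + 1) - y ^ (p + 1))
      + (p + 1) * (u - y) * ((u + y) ^ p - u ^ p)) with hf
  set f' := fun u : ℝ => (p + 1) * (4 * p * y * u ^ (p - 1)
    - (2 - p) * (2 * ((u + y) ^ p - u ^ p) + p * (u - y) * ((u + y) ^ (p - 1) - u ^ (p - 1))))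
    with hf'
  have hderiv : ∀ u ∈ Ici y, HasDerivAt f (f' u) u := by
    intro u hu
    have hu : 0 < u := hy.trans_le hu
    have hpow : ∀ r, HasDerivAt (fun v : ℝ => v ^ r) (r * u ^ (r - 1)) u :=
      fun r => hasDerivAt_rpow_const (Or.inl hu.ne')
    refine ((((hpow p).const_mul (4 * (p + 1) * y)).sub_const _).sub
      (((hasDerivAt_rpow_succ_gap hu (by linarith)).add
        ((((hasDerivAt_id' u).sub_const y).const_mul (p + 1)).mul
          ((hasDerivAt_add_const_rpow p (by linarith)).sub (hpow p)))).const_mul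
            (2 - p))).congr_deriv ?_
    simp only [hf', Pi.sub_apply]
    ring
  have hf'_nonneg : ∀ u ∈ interior (Ici y), 0 ≤ f' u := by
    intro u hu
    rw [interior_Ici, mem_Ioi] at hu
    have hu0 : 0 < u := hy.trans hu
    have htangent := rpow_add_le_tangent hp0 hp1 hu0 (by linarith : 0 ≤ u + y)
    have hdecr : (u + y) ^ (p - 1) ≤ u ^ (p - 1) :=
      rpow_le_rpow_of_nonpos hu0 (by linarith) (by linarith)
    have h1 : 0 ≤ (2 - p) * p * (u - y) * (u ^ (p - 1) - (u + y) ^ (p - 1)) := by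
      apply mul_nonneg (mul_nonneg (mul_nonneg _ hp0) _) <;> linarith
    have h2 : 0 ≤ p * p * y * u ^ (p - 1) := by positivity
    apply mul_nonneg (by linarith)
    nlinarith
  have hfy : 0 ≤ f y := by
    have hval : f y = y ^ (p + 1) * (4 * p - 2 * (2 - p) * (2 ^ p - 1)) := by
      simp only [hf, sub_self, mul_zero, ← two_mul, mul_rpow zero_le_two hy.le,
        rpow_add_one two_ne_zero, rpow_add_one hy.ne']
      ring
    rw [hval]
    exact mul_nonneg (by positivity) (by nlinarith [two_rpow_le_one_add hp0 hp1])
  have key := monotoneOn_of_hasDerivAt_of_nonneg (convex_Ici y) hderiv hf'_nonneg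
    self_mem_Ici hyx hyx
  simp only [hf] at key hfy
  linarith

theorem rpow_succ_gap_le (hp0 : 0 ≤ p) (hp1 : p ≤ 1) (hy : 0 < y) (hyx : y ≤ x) :
    (2 - p) * (x - y) * ((x + y) ^ (p + 1) - x ^ (p + 1) - y ^ (p + 1)) ≤
      4 * x * y * (x ^ p - y ^ p) := by
  have hx : 0 < x := hy.trans_le hyx
  set Z := fun u : ℝ => 4 * y * u ^ (p + 1) - 4 * y ^ (p + 1) * u
    - (2 - p) * (u - y) * ((u + y) ^ (p + 1) - u ^ (p + 1) - y ^ (p + 1)) with hZ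
  have hderiv : ∀ u ∈ Ici y, HasDerivAt Z ((4 * (p + 1) * y * u ^ p - 4 * y ^ (p + 1))
      - (2 - p) * (((u + y) ^ (p + 1) - u ^ (p + 1) - y ^ (p + 1))
        + (p + 1) * (u - y) * ((u + y) ^ p - u ^ p))) u := by
    intro u hu
    have hu : 0 < u := hy.trans_le hu
    refine ((((hasDerivAt_rpow_const (Or.inl hu.ne')).const_mul (4 * y)).sub
      ((hasDerivAt_id' u).const_mul (4 * y ^ (p + 1)))).sub
        ((((hasDerivAt_id' u).sub_const y).const_mul (2 - p)).mul
          (hasDerivAt_rpow_succ_gap hu (by linarith)))).congr_deriv ?_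
    simp only [add_sub_cancel_right]
    ring
  have key := monotoneOn_of_hasDerivAt_of_nonneg (convex_Ici y) hderiv
    (fun u hu => sub_nonneg.2 (deriv_rpow_succ_gap_le hp0 hp1 hy (interior_subset hu)))
    self_mem_Ici hyx hyx
  simp only [hZ, sub_self, mul_zero, zero_mul, sub_zero, rpow_add_one hx.ne',
    rpow_add_one hy.ne'] at key
  rw [rpow_add_one hx.ne', rpow_add_one hy.ne']
  linarith

theorem rpow_succ_gap_mul_trapezoid_error_le (hp0 : 0 ≤ p) (hp1 : p ≤ 1) (hy : 0 < y)
    (hyx : y ≤ x) :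
    ((x + y) ^ (p + 1) - x ^ (p + 1) - y ^ (p + 1)) *
        (p * (x - y) * (x ^ (p - 1) + y ^ (p - 1)) / 2 - (x ^ p - y ^ p)) ≤
      (1 - p) * (x - y) * (x ^ p - y ^ p) ^ 2 / 2 := by
  have hx : 0 < x := hy.trans_le hyx
  have hgap : 0 ≤ (x + y) ^ (p + 1) - x ^ (p + 1) - y ^ (p + 1) := by
    linarith [add_rpow_le_rpow_add hx.le hy.le (by linarith : 1 ≤ p + 1)]
  have hfactor : 0 ≤ (1 - p) * (x - y) * (x ^ p - y ^ p) / (8 * x * y) := by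
    have : 0 ≤ x ^ p - y ^ p := sub_nonneg.2 (rpow_le_rpow hy.le hyx hp0)
    apply div_nonneg (mul_nonneg (mul_nonneg _ _) this) <;> positivity
  calc _ ≤ ((x + y) ^ (p + 1) - x ^ (p + 1) - y ^ (p + 1)) *
          ((1 - p) * (2 - p) * (x - y) ^ 2 * (x ^ p - y ^ p) / (8 * x * y)) :=
        mul_le_mul_of_nonneg_left (trapezoid_rpow_error_le hp0 hp1 hy hyx) hgap
    _ = (2 - p) * (x - y) * ((x + y) ^ (p + 1) - x ^ (p + 1) - y ^ (p + 1)) *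
          ((1 - p) * (x - y) * (x ^ p - y ^ p) / (8 * x * y)) := by ring
    _ ≤ 4 * x * y * (x ^ p - y ^ p) * ((1 - p) * (x - y) * (x ^ p - y ^ p) / (8 * x * y)) :=
        mul_le_mul_of_nonneg_right (rpow_succ_gap_le hp0 hp1 hy hyx) hfactor
    _ = (1 - p) * (x - y) * (x ^ p - y ^ p) ^ 2 / 2 := by field_simp; ring

end RpowInequalities

noncomputable def powGap (q s : ℝ) : ℝ := 1 - ((1 + s) / 2) ^ q - ((1 - s) / 2) ^ q

noncomputable def powDiff (q s : ℝ) : ℝ := ((1 + s) / 2) ^ (q - 1) - ((1 - s) / 2) ^ (q - 1)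

noncomputable def derivSqH (q s : ℝ) : ℝ := powGap q s ^ (2 / q - 1) * powDiff q s / (2 * s)

section BinaryPowers

variable {q s : ℝ}

theorem continuous_powGap (hq : 0 ≤ q) : Continuous (powGap q) := by
  unfold powGap
  exact (continuous_const.sub (((continuous_const.add continuous_id).div_const 2).rpow_const
    fun _ => Or.inr hq)).sub (((continuous_const.sub continuous_id).div_const 2).rpow_const
      fun _ => Or.inr hq)

theorem powGap_nonneg (hq : 1 ≤ q) (hs : s ∈ Icc (-1) 1) : 0 ≤ powGap q s := by
  have := add_rpow_le_rpow_add (by linarith [hs.1] : 0 ≤ (1 + s) / 2)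
    (by linarith [hs.2] : 0 ≤ (1 - s) / 2) hq
  rw [show (1 + s) / 2 + (1 - s) / 2 = 1 by ring, one_rpow] at this
  unfold powGap
  linarith

theorem powGap_pos (hq : 1 < q) (hs : s ∈ Ioo (-1) 1) : 0 < powGap q s := by
  have ha := rpow_lt_self_of_lt_one (by linarith [hs.1] : 0 < (1 + s) / 2)
    (by linarith [hs.2] : (1 + s) / 2 < 1) hq
  have hb := rpow_lt_self_of_lt_one (by linarith [hs.2] : 0 < (1 - s) / 2)
    (by linarith [hs.1] : (1 - s) / 2 < 1) hq
  unfold powGap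
  linarith

theorem powDiff_pos (hq : 1 < q) (hs : s ∈ Ioo 0 1) : 0 < powDiff q s :=
  sub_pos.2 (rpow_lt_rpow (by linarith [hs.2]) (by linarith [hs.1]) (by linarith))

theorem hasDerivAt_powGap (hq : 1 ≤ q) (s : ℝ) :
    HasDerivAt (powGap q) (-(q / 2) * powDiff q s) s := by
  have ha : HasDerivAt (fun u : ℝ => (1 + u) / 2) (1 / 2) s :=
    ((hasDerivAt_id' s).const_add 1).div_const 2
  have hb : HasDerivAt (fun u : ℝ => (1 - u) / 2) (-1 / 2) s :=
    ((hasDerivAt_id' s).const_sub 1).div_const 2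
  refine (((hasDerivAt_const s 1).sub (ha.rpow_const (Or.inr hq))).sub
    (hb.rpow_const (Or.inr hq))).congr_deriv ?_
  unfold powDiff
  ring

theorem hasDerivAt_powDiff (hs : s ∈ Ioo (-1) 1) :
    HasDerivAt (powDiff q)
      ((q - 1) / 2 * (((1 + s) / 2) ^ (q - 2) + ((1 - s) / 2) ^ (q - 2))) s := by
  have ha : HasDerivAt (fun u : ℝ => (1 + u) / 2) (1 / 2) s :=
    ((hasDerivAt_id' s).const_add 1).div_const 2
  have hb : HasDerivAt (fun u : ℝ => (1 - u) / 2) (-1 / 2) s :=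
    ((hasDerivAt_id' s).const_sub 1).div_const 2
  refine ((ha.rpow_const (Or.inl (by linarith [hs.1]))).sub
    (hb.rpow_const (Or.inl (by linarith [hs.2])))).congr_deriv ?_
  rw [show q - 1 - 1 = q - 2 by ring]
  ring

theorem powGap_mul_trapezoid_error_le (hq1 : 1 ≤ q) (hq2 : q ≤ 2) (hs : s ∈ Ico 0 1) :
    (q - 1) * s * (((1 + s) / 2) ^ (q - 2) + ((1 - s) / 2) ^ (q - 2)) * powGap q s
      - 2 * powGap q s * powDiff q s ≤ (2 - q) * s * powDiff q s ^ 2 := by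
  have key := rpow_succ_gap_mul_trapezoid_error_le (p := q - 1) (by linarith) (by linarith)
    (by linarith [hs.2] : 0 < (1 - s) / 2) (by linarith [hs.1] : (1 - s) / 2 ≤ (1 + s) / 2)
  rw [show (1 + s) / 2 + (1 - s) / 2 = 1 by ring, show (1 + s) / 2 - (1 - s) / 2 = s by ring,
    one_rpow, sub_add_cancel, show q - 1 - 1 = q - 2 by ring] at key
  unfold powGap powDiff
  linarith [key]

theorem hasDerivAt_derivSqH (hq : 1 < q) (hs : s ∈ Ioo 0 1) :
    HasDerivAt (derivSqH q) (derivSqH q s *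
      (((q - 1) * s * (((1 + s) / 2) ^ (q - 2) + ((1 - s) / 2) ^ (q - 2)) * powGap q s
        - 2 * powGap q s * powDiff q s - (2 - q) * s * powDiff q s ^ 2)
        / (2 * s * powGap q s * powDiff q s))) s := by
  have hs' : s ∈ Ioo (-1) 1 := ⟨by linarith [hs.1], hs.2⟩
  have hG := powGap_pos hq hs'
  have hW := powDiff_pos hq hs
  have hs0 : 0 < s := hs.1
  refine ((((hasDerivAt_powGap hq.le s).rpow_const (p := 2 / q - 1) (Or.inl hG.ne')).mul
    (hasDerivAt_powDiff hs')).div ((hasDerivAt_id' s).const_mul 2) (by positivity)).congr_deriv ?_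
  rw [derivSqH, Pi.mul_apply, rpow_sub_one hG.ne']
  field_simp
  ring

theorem antitoneOn_derivSqH (hq1 : 1 < q) (hq2 : q ≤ 2) : AntitoneOn (derivSqH q) (Ioo 0 1) := by
  refine antitoneOn_of_hasDerivWithinAt_nonpos (convex_Ioo 0 1)
    (fun s hs => (hasDerivAt_derivSqH hq1 hs).continuousAt.continuousWithinAt)
    (fun s hs => (hasDerivAt_derivSqH hq1 (interior_subset hs)).hasDerivWithinAt)
    fun s hs => ?_
  rw [interior_Ioo] at hs
  have hs' : s ∈ Ioo (-1) 1 := ⟨by linarith [hs.1], hs.2⟩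
  have hG := powGap_pos hq1 hs'
  have hW := powDiff_pos hq1 hs
  have hs0 : 0 < s := hs.1
  refine mul_nonpos_of_nonneg_of_nonpos (by unfold derivSqH; positivity)
    (div_nonpos_of_nonpos_of_nonneg ?_ (by positivity))
  linarith [powGap_mul_trapezoid_error_le hq1.le hq2 (Ioo_subset_Ico_self hs)]

end BinaryPowers

theorem sqrt_one_sub_mem_Ioo {t : ℝ} (ht : t ∈ Ioo (0 : ℝ) 1) :
    √(1 - t) ∈ Ioo (0 : ℝ) 1 :=
  ⟨sqrt_pos.2 (by linarith [ht.2]), (sqrt_lt' one_pos).2 (by linarith [ht.1])⟩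

theorem continuous_h {q : ℝ} (hq : 0 ≤ q) : Continuous (h q) :=
  ((continuous_powGap hq).comp (continuous_const.sub continuous_id).sqrt).rpow_const
    fun _ => Or.inr (by positivity)

theorem hasDerivAt_sq_h {q t : ℝ} (hq : 1 < q) (ht : t ∈ Ioo (0 : ℝ) 1) :
    HasDerivAt (fun t => h q t ^ 2) (derivSqH q (√(1 - t))) t := by
  have hs := sqrt_one_sub_mem_Ioo ht
  have hG := powGap_pos hq ⟨by linarith [hs.1], hs.2⟩
  have hsqrt : HasDerivAt (fun u => √(1 - u)) (-1 / (2 * √(1 - t))) t :=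
    ((hasDerivAt_id' t).const_sub 1).sqrt (by linarith [ht.2])
  have hsq : ∀ u ∈ Ioo (0 : ℝ) 1, h q u ^ 2 = powGap q (√(1 - u)) ^ (2 / q) := by
    intro u hu
    have hs := sqrt_one_sub_mem_Ioo hu
    rw [h, ← powGap, ← rpow_mul_natCast (powGap_nonneg hq.le ⟨by linarith [hs.1], hs.2.le⟩)]
    push_cast
    ring_nf
  refine ((((hasDerivAt_powGap hq.le _).comp t hsqrt).rpow_const (Or.inl hG.ne')).congr_deriv
    ?_).congr_of_eventuallyEq (Filter.eventuallyEq_of_mem (isOpen_Ioo.mem_nhds ht) hsq)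
  have hs0 : 0 < √(1 - t) := hs.1
  rw [derivSqH, Function.comp_apply]
  field_simp

theorem h_sq_convex (q : ℝ) (hq1 : 1 < q) (hq2 : q ≤ 2) :
    ConvexOn ℝ (Set.Icc (0:ℝ) 1) (fun t => (h q t) ^ 2) := by
  have hderiv := fun t (ht : t ∈ Ioo (0 : ℝ) 1) => hasDerivAt_sq_h hq1 ht
  refine MonotoneOn.convexOn_of_deriv (convex_Icc 0 1)
    ((continuous_h (by linarith)).pow 2).continuousOn ?_ ?_ <;> rw [interior_Icc]
  · exact fun t ht => (hderiv t ht).differentiableAt.differentiableWithinAt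
  · intro t ht t' ht' htt'
    rw [(hderiv t ht).deriv, (hderiv t' ht').deriv]
    exact antitoneOn_derivSqH hq1 hq2 (sqrt_one_sub_mem_Ioo ht') (sqrt_one_sub_mem_Ioo ht)
      (sqrt_le_sqrt (by linarith))
end

section
/- For every q with 1 < q ≤ 2, the function t ↦ h_q(t)² is monotonically increasing on [0,1]. -/
/-!
Writing `a = (1 + √(1 - t)) / 2 ∈ [1/2, 1]`, the base of the outer power in `h q t` is
`1 - (a ^ q + (1 - a) ^ q)`. For `q ≥ 1` the map `a ↦ a ^ q + (1 - a) ^ q` increases on `[1/2, 1]`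
(its derivative is `q (a ^ (q-1) - (1 - a) ^ (q-1)) ≥ 0`) while `a` decreases in `t`, so the base
increases in `t`; it vanishes at `t = 0`, hence is nonnegative, and `h q t ^ 2` is its `2/q`-th power.
-/

open Real Set

lemma monotoneOn_rpow_add_one_sub_rpow {q : ℝ} (hq : 1 ≤ q) :
    MonotoneOn (fun x : ℝ => x ^ q + (1 - x) ^ q) (Icc (1 / 2) 1) := by
  have hderiv : ∀ x : ℝ, HasDerivAt (fun x : ℝ => x ^ q + (1 - x) ^ q)
      (q * x ^ (q - 1) + q * (1 - x) ^ (q - 1) * (0 - 1)) x := fun x =>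
    (hasDerivAt_rpow_const (Or.inr hq)).add
      ((hasDerivAt_rpow_const (Or.inr hq)).comp x ((hasDerivAt_const x 1).sub (hasDerivAt_id x)))
  refine monotoneOn_of_deriv_nonneg (convex_Icc _ _)
    (fun x _ => (hderiv x).continuousAt.continuousWithinAt)
    (fun x _ => (hderiv x).differentiableAt.differentiableWithinAt) fun x hx => ?_
  rw [interior_Icc] at hx
  have hpow : (1 - x) ^ (q - 1) ≤ x ^ (q - 1) :=
    rpow_le_rpow (by linarith [hx.2]) (by linarith [hx.1]) (by linarith)
  rw [(hderiv x).deriv]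
  nlinarith

lemma antitone_one_add_sqrt_one_sub_div_two :
    Antitone fun t : ℝ => (1 + √(1 - t)) / 2 := fun _ _ hst => by
  have := sqrt_le_sqrt (sub_le_sub_left hst 1)
  linarith

lemma one_add_sqrt_one_sub_div_two_mem {t : ℝ} (ht : 0 ≤ t) :
    (1 + √(1 - t)) / 2 ∈ Icc (1 / 2 : ℝ) 1 := by
  have h0 := sqrt_nonneg (1 - t)
  have h1 : √(1 - t) ≤ 1 := sqrt_le_one.mpr (by linarith)
  constructor <;> linarith

lemma hBase_monotoneOn {q : ℝ} (hq : 1 ≤ q) : MonotoneOn (hBase q) (Ici 0) := by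
  intro s hs t ht hst
  have hmono := monotoneOn_rpow_add_one_sub_rpow hq
    (one_add_sqrt_one_sub_div_two_mem (mem_Ici.mp ht))
    (one_add_sqrt_one_sub_div_two_mem (mem_Ici.mp hs))
    (antitone_one_add_sqrt_one_sub_div_two hst)
  have hsym : ∀ u : ℝ, (1 - √(1 - u)) / 2 = 1 - (1 + √(1 - u)) / 2 := fun u => by ring
  simp only [hBase, hsym] at hmono ⊢
  linarith

lemma hBase_zero {q : ℝ} (hq : q ≠ 0) : hBase q 0 = 0 := by
  simp [hBase, zero_rpow hq]

lemma h_sq_eq_hBase_rpow {q t : ℝ} (hnonneg : 0 ≤ hBase q t) : h q t ^ 2 = hBase q t ^ (2 / q) := by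
  change (hBase q t ^ (1 / q)) ^ 2 = _
  rw [← rpow_mul_natCast hnonneg]
  ring_nf

theorem h_sq_monotone_general (q : ℝ) (hq1 : 1 < q) :
    MonotoneOn (fun t => (h q t) ^ 2) (Set.Icc (0:ℝ) 1) := by
  intro s hs t ht hst
  change h q s ^ 2 ≤ h q t ^ 2
  have hs0 := hBase_nonneg hq1.le hs.1
  rw [h_sq_eq_hBase_rpow hs0, h_sq_eq_hBase_rpow (hBase_nonneg hq1.le ht.1)]
  exact rpow_le_rpow hs0 (hBase_monotoneOn hq1.le hs.1 ht.1 hst) (by positivity)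

theorem h_sq_monotone (q : ℝ) (hq1 : 1 < q) (hq2 : q ≤ 2) :
    MonotoneOn (fun t => (h q t) ^ 2) (Set.Icc (0:ℝ) 1) :=
  h_sq_monotone_general q hq1
end

section
/- For every q with 1 < q ≤ 2 and all x, y ∈ [0,1] with x + y ≤ 1, one has h_q(x+y)² ≥ h_q(x)² + h_q(y)², where h_q(t) = (1 - ((1+√(1-t))/2)^q - ((1-√(1-t))/2)^q)^{1/q}. -/
/-!
Write `F = hPow q`, so that `h q t ^ 2 = F t ^ (2 / q)`. Superadditivity of `F ^ (2 / q)` on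
`[0, 1]` follows once `F t ^ (2 / q) / t` is nondecreasing on `(0, 1]`, and by differentiating
this reduces to `q F t ≤ 2 t F' t`. With `s = √(1 - t)`, i.e. `t = (1 + s) (1 - s)`, clearing
denominators turns it into `s ≤ ((1 + s) / 2) ^ q - ((1 - s) / 2) ^ q`, which holds because the
right-hand side is a concave function of `s ∈ [0, 1]` (this is where `q ≤ 2` enters) taking the
values `0` and `1` at the endpoints.
-/

open Real Set

lemma concaveOn_half_add_rpow_sub_half_sub_rpow {q : ℝ} (hq1 : 1 ≤ q) (hq2 : q ≤ 2) :
    ConcaveOn ℝ (Icc 0 1) (fun s : ℝ => ((1 + s) / 2) ^ q - ((1 - s) / 2) ^ q) := by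
  have hA (s : ℝ) : HasDerivAt (fun v : ℝ => (1 + v) / 2) (1 / 2) s := by
    simpa using ((hasDerivAt_id s).const_add 1).div_const 2
  have hB (s : ℝ) : HasDerivAt (fun v : ℝ => (1 - v) / 2) (-1 / 2) s := by
    simpa using ((hasDerivAt_id s).const_sub 1).div_const 2
  have hφ (s : ℝ) := ((hA s).rpow_const (Or.inr hq1)).sub ((hB s).rpow_const (Or.inr hq1))
  refine concaveOn_of_hasDerivWithinAt2_nonpos (convex_Icc 0 1)
    (f' := fun s => q / 2 * (((1 + s) / 2) ^ (q - 1) + ((1 - s) / 2) ^ (q - 1)))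
    (f'' := fun s => q * (q - 1) / 4 * (((1 + s) / 2) ^ (q - 2) - ((1 - s) / 2) ^ (q - 2)))
    ?_ ?_ ?_ ?_
  · exact (continuous_iff_continuousAt.2 fun s => (hφ s).continuousAt).continuousOn
  · exact fun s _ => ((hφ s).congr_deriv (by ring)).hasDerivWithinAt
  · intro s hs
    rw [interior_Icc] at hs
    have hA' := (hA s).rpow_const (p := q - 1) (Or.inl (by linarith [hs.1]))
    have hB' := (hB s).rpow_const (p := q - 1) (Or.inl (by linarith [hs.2]))
    refine (((hA'.add hB').const_mul (q / 2)).congr_deriv ?_).hasDerivWithinAt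
    ring_nf
  · intro s hs
    rw [interior_Icc] at hs
    have hpow : ((1 + s) / 2) ^ (q - 2) ≤ ((1 - s) / 2) ^ (q - 2) :=
      rpow_le_rpow_of_nonpos (by linarith [hs.2]) (by linarith [hs.1]) (by linarith)
    have hcoeff : 0 ≤ q * (q - 1) / 4 := by nlinarith
    exact mul_nonpos_of_nonneg_of_nonpos hcoeff (by linarith)

lemma le_half_add_rpow_sub_half_sub_rpow {q s : ℝ} (hq1 : 1 ≤ q) (hq2 : q ≤ 2)
    (hs0 : 0 ≤ s) (hs1 : s ≤ 1) : s ≤ ((1 + s) / 2) ^ q - ((1 - s) / 2) ^ q := by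
  have hconc := (concaveOn_half_add_rpow_sub_half_sub_rpow hq1 hq2).2
    (left_mem_Icc.2 zero_le_one) (right_mem_Icc.2 zero_le_one) (by linarith : 0 ≤ 1 - s) hs0
    (by ring)
  simpa [zero_rpow (by linarith : q ≠ 0)] using hconc

noncomputable def hPow (q t : ℝ) : ℝ :=
  1 - ((1 + √(1 - t)) / 2) ^ q - ((1 - √(1 - t)) / 2) ^ q

noncomputable def hPowDeriv (q t : ℝ) : ℝ :=
  q * (((1 + √(1 - t)) / 2) ^ (q - 1) - ((1 - √(1 - t)) / 2) ^ (q - 1)) / (4 * √(1 - t))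

lemma h_eq_hPow_rpow (q t : ℝ) : h q t = hPow q t ^ (1 / q) := rfl

lemma continuous_hPow {q : ℝ} (hq : 0 ≤ q) : Continuous (hPow q) := by
  have hs : Continuous fun t : ℝ => √(1 - t) :=
    continuous_sqrt.comp (continuous_const.sub continuous_id)
  exact (continuous_const.sub (((continuous_const.add hs).div_const 2).rpow_const
    fun _ => Or.inr hq)).sub (((continuous_const.sub hs).div_const 2).rpow_const fun _ => Or.inr hq)

lemma hPow_pos {q t : ℝ} (hq : 1 < q) (ht : 0 < t) : 0 < hPow q t := by
  have hs1 : √(1 - t) < 1 := (sqrt_lt' one_pos).2 (by rw [one_pow]; linarith)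
  have hs0 : 0 ≤ √(1 - t) := sqrt_nonneg _
  have hA := rpow_lt_self_of_lt_one (x := (1 + √(1 - t)) / 2) (by linarith) (by linarith) hq
  have hB := rpow_le_self_of_le_one (x := (1 - √(1 - t)) / 2) (by linarith) (by linarith) hq.le
  unfold hPow
  linarith

lemma hasDerivAt_hPow {q t : ℝ} (hq : 1 ≤ q) (ht : t < 1) :
    HasDerivAt (hPow q) (hPowDeriv q t) t := by
  have hs0 : 0 < √(1 - t) := sqrt_pos.2 (by linarith)
  have hs : HasDerivAt (fun u : ℝ => √(1 - u)) (1 / (2 * √(1 - t)) * (-1)) t :=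
    (hasDerivAt_sqrt (by linarith)).comp t (by simpa using (hasDerivAt_id t).const_sub 1)
  have hA := ((hs.const_add 1).div_const 2).rpow_const (p := q) (Or.inr hq)
  have hB := ((hs.const_sub 1).div_const 2).rpow_const (p := q) (Or.inr hq)
  refine (((hasDerivAt_const t 1).sub hA).sub hB).congr_deriv ?_
  unfold hPowDeriv
  field_simp
  ring

lemma hPow_le_mul_hPowDeriv {q t : ℝ} (hq1 : 1 ≤ q) (hq2 : q ≤ 2) (ht0 : 0 < t)
    (ht1 : t < 1) : hPow q t ≤ 2 / q * t * hPowDeriv q t := by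
  set s := √(1 - t) with hs
  have hs0 : 0 < s := sqrt_pos.2 (by linarith)
  have hs1 : s < 1 := (sqrt_lt' one_pos).2 (by rw [one_pow]; linarith)
  have hs2 : s ^ 2 = 1 - t := sq_sqrt (by linarith)
  have hA := rpow_sub_one (x := (1 + s) / 2) (by linarith) q
  have hB := rpow_sub_one (x := (1 - s) / 2) (by linarith) q
  have key := le_half_add_rpow_sub_half_sub_rpow hq1 hq2 hs0.le hs1.le
  have hRHS : 2 / q * t * hPowDeriv q t = hPow q t +
      (((1 + s) / 2) ^ q - ((1 - s) / 2) ^ q - s) / s := by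
    simp only [hPow, hPowDeriv, ← hs, hA, hB]
    have : 1 - s ≠ 0 := by linarith
    have : s ≠ 0 := hs0.ne'
    field_simp
    rw [show t = 1 - s ^ 2 by linarith]
    ring
  rw [hRHS]
  linarith [div_nonneg (sub_nonneg.2 key) hs0.le]

lemma monotoneOn_rpow_div_self {D : Set ℝ} (hD : Convex ℝ D) (hD0 : ∀ x ∈ D, 0 < x)
    {f f' : ℝ → ℝ} {p : ℝ} (hp : 0 ≤ p) (hf : ContinuousOn f D)
    (hf' : ∀ x ∈ interior D, HasDerivAt f (f' x) x) (hf0 : ∀ x ∈ interior D, 0 < f x)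
    (hff' : ∀ x ∈ interior D, f x ≤ p * x * f' x) :
    MonotoneOn (fun x => f x ^ p / x) D := by
  refine monotoneOn_of_hasDerivWithinAt_nonneg hD
    (f' := fun x => (f' x * p * f x ^ (p - 1) * x - f x ^ p * 1) / x ^ 2)
    ((hf.rpow_const fun _ _ => Or.inr hp).div continuousOn_id fun x hx => (hD0 x hx).ne')
    (fun x hx => (((hf' x hx).rpow_const (Or.inl (hf0 x hx).ne')).div (hasDerivAt_id x)
      (hD0 x (interior_subset hx)).ne').hasDerivWithinAt) fun x hx => ?_
  have hfx := hf0 x hx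
  have hnum : f' x * p * f x ^ (p - 1) * x - f x ^ p * 1 =
      f x ^ (p - 1) * (p * x * f' x - f x) := by
    rw [rpow_sub_one hfx.ne']
    field_simp
  rw [hnum]
  exact div_nonneg (mul_nonneg (rpow_nonneg hfx.le _) (sub_nonneg.2 (hff' x hx))) (sq_nonneg x)

lemma add_le_of_monotoneOn_div_self {g : ℝ → ℝ} {c x y : ℝ}
    (hg : MonotoneOn (fun t => g t / t) (Ioc 0 c)) (hx : 0 < x) (hy : 0 < y) (hxy : x + y ≤ c) :
    g x + g y ≤ g (x + y) := by
  have hxy0 : x + y ∈ Ioc 0 c := ⟨by linarith, hxy⟩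
  calc g x + g y = x * (g x / x) + y * (g y / y) := by field_simp
    _ ≤ x * (g (x + y) / (x + y)) + y * (g (x + y) / (x + y)) :=
      add_le_add (mul_le_mul_of_nonneg_left (hg ⟨hx, by linarith⟩ hxy0 (by linarith)) hx.le)
        (mul_le_mul_of_nonneg_left (hg ⟨hy, by linarith⟩ hxy0 (by linarith)) hy.le)
    _ = g (x + y) := by field_simp

lemma rpow_one_div_sq {a : ℝ} (ha : 0 ≤ a) (q : ℝ) : (a ^ (1 / q)) ^ 2 = a ^ (2 / q) := by
  rw [← rpow_natCast, ← rpow_mul ha]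
  ring_nf

lemma h_zero {q : ℝ} (hq : q ≠ 0) : h q 0 = 0 := by
  simp [h, zero_rpow hq, hq]

theorem h_sq_superadditive (q : ℝ) (hq1 : 1 < q) (hq2 : q ≤ 2)
    (x y : ℝ) (hx : 0 ≤ x) (hy : 0 ≤ y) (hxy : x + y ≤ 1) :
    h q (x + y) ^ 2 ≥ h q x ^ 2 + h q y ^ 2 := by
  have hq0 : q ≠ 0 := by positivity
  rcases hx.eq_or_lt with rfl | hx0
  · simp [h_zero hq0]
  rcases hy.eq_or_lt with rfl | hy0
  · simp [h_zero hq0]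
  have hmono : MonotoneOn (fun t => hPow q t ^ (2 / q) / t) (Ioc 0 1) := by
    refine monotoneOn_rpow_div_self (f' := hPowDeriv q) (convex_Ioc 0 1) (fun _ ht => ht.1)
      (by positivity) (continuous_hPow (by positivity)).continuousOn ?_ ?_ ?_ <;>
      rw [interior_Ioc]
    · exact fun t ht => hasDerivAt_hPow hq1.le ht.2
    · exact fun t ht => hPow_pos hq1 ht.1
    · exact fun t ht => hPow_le_mul_hPowDeriv hq1.le hq2 ht.1 ht.2
  have hsq {t : ℝ} (ht : 0 < t) : h q t ^ 2 = hPow q t ^ (2 / q) := by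
    rw [h_eq_hPow_rpow, rpow_one_div_sq (hPow_pos hq1 ht).le]
  rw [hsq hx0, hsq hy0, hsq (by linarith)]
  exact add_le_of_monotoneOn_div_self hmono hx0 hy0 hxy
end

section
/- For all q ∈ (1, 2], 4q + (q - 3)·2^q ≥ 0. -/
/-!
On `[1, 2]` the convex function `q ↦ 2 ^ q` lies below its chord `q ↦ 2 q`. Since `q - 3 < 0`,
this gives `4 q + (q - 3) 2 ^ q ≥ 4 q + 2 q (q - 3) = 2 q (q - 1) ≥ 0`.
-/

open Real

lemma Real.rpow_le_chord_one_two {b q : ℝ} (hb : 0 < b) (hq1 : 1 ≤ q) (hq2 : q ≤ 2) :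
    b ^ q ≤ (2 - q) * b + (q - 1) * b ^ (2 : ℝ) := by
  have h := (convexOn_rpow_left hb).2 (Set.mem_univ 1) (Set.mem_univ 2)
    (by linarith : 0 ≤ 2 - q) (by linarith : 0 ≤ q - 1) (by ring)
  simp only [smul_eq_mul, rpow_one] at h
  rwa [show (2 - q) * 1 + (q - 1) * 2 = q by ring] at h

lemma Real.two_rpow_le_two_mul {q : ℝ} (hq1 : 1 ≤ q) (hq2 : q ≤ 2) : (2 : ℝ) ^ q ≤ 2 * q := by
  have h := rpow_le_chord_one_two two_pos hq1 hq2
  norm_num at h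
  linarith

theorem four_q_ineq (q : ℝ) (hq1 : 1 < q) (hq2 : q ≤ 2) :
    0 ≤ 4 * q + (q - 3) * (2:ℝ) ^ q := by
  have hchord : (2 : ℝ) ^ q ≤ 2 * q := two_rpow_le_two_mul hq1.le hq2
  calc 0 ≤ 2 * q * (q - 1) := by nlinarith
    _ = 4 * q + (q - 3) * (2 * q) := by ring
    _ ≤ 4 * q + (q - 3) * (2:ℝ) ^ q := by
      gcongr 4 * q + ?_
      exact mul_le_mul_of_nonpos_left hchord (by linarith)
end

section
/- For all q ∈ (1, 2], 2^q·q² - 5q·2^q + 6·2^q + 4q² - 2q - 6 ≥ 0. -/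
theorem concavity_boundary_ineq (q : ℝ) (hq1 : 1 < q) (hq2 : q ≤ 2) :
    0 ≤ (2:ℝ) ^ q * q ^ 2 - 5 * q * (2:ℝ) ^ q + 6 * (2:ℝ) ^ q + 4 * q ^ 2 - 2 * q - 6 := by
  have two_le_rpow : (2:ℝ) ≤ 2 ^ q := by
    simpa using Real.rpow_le_rpow_of_exponent_le one_le_two hq1.le
  have factor_nonneg : 0 ≤ (2 - q) * (3 - q) := mul_nonneg (by linarith) (by linarith)
  calc 0 ≤ 6 * (q - 1) ^ 2 := by positivity
    _ = 2 * ((2 - q) * (3 - q)) + (4 * q ^ 2 - 2 * q - 6) := by ring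
    _ ≤ 2 ^ q * ((2 - q) * (3 - q)) + (4 * q ^ 2 - 2 * q - 6) := by gcongr
    _ = _ := by ring
end

section
/- For real a, b with a² + b² = 1 and every q ∈ (1, 3/2], the quantity M_q = (1 - a^{2q}/2^{q-1} - b^{2q}/2^{q-1})^{2/q} - (1 - a^{2q} - b^{2q})^{2/q} - (1 - (1/2)^{q-1})^{2/q} is nonnegative. -/
/-! With `x = a²`, `y = b²`, `T = 2^(1-q)`, `s = x^q + y^q` and `p = 2/q`, the three terms are
`(1 - T s)^p`, `(1 - s)^p` and `(1 - T)^p`, and `T ≤ s ≤ 1` by convexity of `x ↦ x^q`.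
Writing `1 - s = l (1 - T)` with `l ∈ [0, 1]` reduces the claim to `1 + l^p ≤ (1 + l T)^p`.
Increments of the convex function `x ↦ x^p` grow with `x`, so
`(1 + l T)^p - 1 ≥ (l + l T)^p - l^p = l^p ((1 + T)^p - 1)`, and `(1 + T)^p ≥ 2` is the inequality
`2^(q/2) ≤ 1 + 2^(1-q)`, which is where `q ≤ 3/2` enters. -/

open Set Real

theorem ConvexOn.map_add_sub_map_le_of_le {𝕜 : Type*} [Field 𝕜] [LinearOrder 𝕜]
    [IsStrictOrderedRing 𝕜] {s : Set 𝕜} {f : 𝕜 → 𝕜} (hf : ConvexOn 𝕜 s f) {x y d : 𝕜}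
    (hx : x ∈ s) (hyd : y + d ∈ s) (hd : 0 ≤ d) (hxy : x ≤ y) :
    f (x + d) - f x ≤ f (y + d) - f y := by
  rcases (add_nonneg (sub_nonneg.2 hxy) hd).eq_or_lt with hL | hL
  · obtain rfl : d = 0 := by linarith
    obtain rfl : y = x := by linarith
    rfl
  -- `x + d` and `y` are mirror-image convex combinations of the endpoints `x` and `y + d`.
  set θ := d / (y - x + d)
  have hθ0 : 0 ≤ θ := div_nonneg hd hL.le
  have hθ1 : θ ≤ 1 := div_le_one_of_le₀ (by linarith) hL.le
  have h₁ := hf.2 hx hyd (sub_nonneg.2 hθ1) hθ0 (sub_add_cancel 1 θ)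
  have h₂ := hf.2 hx hyd hθ0 (sub_nonneg.2 hθ1) (add_sub_cancel θ 1)
  have e₁ : (1 - θ) * x + θ * (y + d) = x + d := by
    simp only [θ]; field_simp; ring
  have e₂ : θ * x + (1 - θ) * (y + d) = y := by
    simp only [θ]; field_simp; ring
  simp only [smul_eq_mul, e₁, e₂] at h₁ h₂
  linarith

theorem one_add_rpow_le_one_add_mul_rpow {p t l : ℝ} (hp : 1 ≤ p) (ht : 0 ≤ t)
    (h2 : 2 ≤ (1 + t) ^ p) (hl0 : 0 ≤ l) (hl1 : l ≤ 1) :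
    1 + l ^ p ≤ (1 + l * t) ^ p := by
  have hinc := (convexOn_rpow hp).map_add_sub_map_le_of_le (d := l * t) hl0
    (by simp only [mem_Ici]; positivity) (by positivity) hl1
  have hscale : (l + l * t) ^ p = l ^ p * (1 + t) ^ p := by
    rw [← mul_rpow hl0 (by positivity), mul_one_add]
  rw [hscale, one_rpow] at hinc
  nlinarith [rpow_nonneg hl0 p]

theorem two_rpow_half_le_one_add_two_rpow_one_sub {q : ℝ} (hq0 : 0 ≤ q) (hq : q ≤ 3 / 2) :
    (2 : ℝ) ^ (q / 2) ≤ 1 + 2 ^ (1 - q) := by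
  set u := (2 : ℝ) ^ (q / 2)
  have hu1 : 1 ≤ u := one_le_rpow one_le_two (by positivity)
  have hu2 : u ^ 2 = 2 ^ q := by
    rw [← rpow_natCast, ← rpow_mul zero_le_two]; norm_num
  have hu4 : u ^ 4 ≤ 8 := by
    calc u ^ 4 = (2 : ℝ) ^ (2 * q) := by
          rw [← rpow_natCast, ← rpow_mul zero_le_two]; norm_num; ring_nf
      _ ≤ 2 ^ (3 : ℝ) := rpow_le_rpow_of_exponent_le one_le_two (by linarith)
      _ = 8 := by norm_num
  rw [rpow_sub zero_lt_two, rpow_one, ← hu2, ← sub_le_iff_le_add', le_div_iff₀ (by positivity)]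
  -- `u ^ 4 ≤ 8` forces `u ≤ 1.69`, and `u ^ 2 (u - 1) ≤ 1.69 ^ 2 * 0.69 < 2`.
  have hu : u ≤ 169 / 100 :=
    le_of_pow_le_pow_left₀ four_ne_zero (by norm_num) (hu4.trans (by norm_num))
  nlinarith

theorem two_rpow_one_sub_le_rpow_add_rpow {q x y : ℝ} (hq : 1 ≤ q) (hx : 0 ≤ x) (hy : 0 ≤ y)
    (hxy : x + y = 1) : (2 : ℝ) ^ (1 - q) ≤ x ^ q + y ^ q := by
  have hmid := (convexOn_rpow hq).2 hx hy (by norm_num : (0 : ℝ) ≤ 1 / 2)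
    (by norm_num : (0 : ℝ) ≤ 1 / 2) (add_halves 1)
  rw [smul_eq_mul, smul_eq_mul, ← mul_add, hxy, mul_one, smul_eq_mul, smul_eq_mul] at hmid
  have hT : (2 : ℝ) ^ (1 - q) = 2 * (1 / 2) ^ q := by
    rw [rpow_sub zero_lt_two, rpow_one, div_rpow zero_le_one zero_le_two, one_rpow]; ring
  linarith

theorem rpow_one_sub_add_rpow_one_sub_le {p s t : ℝ} (hp : 1 ≤ p) (ht0 : 0 ≤ t) (ht1 : t < 1)
    (h2 : 2 ≤ (1 + t) ^ p) (hts : t ≤ s) (hs1 : s ≤ 1) :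
    (1 - s) ^ p + (1 - t) ^ p ≤ (1 - t * s) ^ p := by
  have ht : 0 < 1 - t := sub_pos.2 ht1
  -- Normalize by `1 - t`: with `l := (1 - s) / (1 - t)`, `1 - t * s = (1 - t) * (1 + l * t)`.
  set l := (1 - s) / (1 - t)
  have hl0 : 0 ≤ l := div_nonneg (by linarith) ht.le
  have hl1 : l ≤ 1 := (div_le_one ht).2 (by linarith)
  have hs : 1 - s = l * (1 - t) := (div_mul_cancel₀ _ ht.ne').symm
  have hts' : 1 - t * s = (1 - t) * (1 + l * t) := by linear_combination t * hs
  rw [hs, hts', mul_rpow hl0 ht.le, mul_rpow ht.le (by positivity)]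
  nlinarith [one_add_rpow_le_one_add_mul_rpow hp ht0 h2 hl0 hl1, rpow_nonneg ht.le p]

theorem sgqc_monogamy_422 (a b q : ℝ) (hab : a ^ 2 + b ^ 2 = 1)
    (hq1 : 1 < q) (hq2 : q ≤ 3 / 2) :
    0 ≤ (1 - (a ^ 2) ^ q / (2:ℝ) ^ (q - 1) - (b ^ 2) ^ q / (2:ℝ) ^ (q - 1)) ^ (2 / q)
        - (1 - (a ^ 2) ^ q - (b ^ 2) ^ q) ^ (2 / q)
        - (1 - ((1:ℝ) / 2) ^ (q - 1)) ^ (2 / q) := by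
  have hq0 : 0 < q := by linarith
  have hp : 1 ≤ 2 / q := (one_le_div hq0).2 (by linarith)
  have hT1 : (2 : ℝ) ^ (1 - q) < 1 := rpow_lt_one_of_one_lt_of_neg one_lt_two (by linarith)
  have h2 : 2 ≤ (1 + (2 : ℝ) ^ (1 - q)) ^ (2 / q) :=
    calc (2 : ℝ) = ((2 : ℝ) ^ (q / 2)) ^ (2 / q) := by
          rw [← rpow_mul zero_le_two, show q / 2 * (2 / q) = 1 by field_simp, rpow_one]
      _ ≤ _ := rpow_le_rpow (by positivity)
          (two_rpow_half_le_one_add_two_rpow_one_sub hq0.le hq2) (by positivity)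
  have hs1 : (a ^ 2) ^ q + (b ^ 2) ^ q ≤ 1 := by
    simpa [hab] using add_rpow_le_rpow_add (sq_nonneg a) (sq_nonneg b) hq1.le
  have key := rpow_one_sub_add_rpow_one_sub_le hp (by positivity) hT1 h2
    (two_rpow_one_sub_le_rpow_add_rpow hq1.le (sq_nonneg a) (sq_nonneg b) hab) hs1
  have hdiv (z : ℝ) : z / (2 : ℝ) ^ (q - 1) = 2 ^ (1 - q) * z := by
    rw [div_eq_inv_mul, ← rpow_neg zero_le_two, neg_sub]
  have hhalf : ((1 : ℝ) / 2) ^ (q - 1) = 2 ^ (1 - q) := by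
    rw [one_div, inv_rpow zero_le_two, ← rpow_neg zero_le_two, neg_sub]
  rw [mul_add, ← sub_sub, ← sub_sub] at key
  rw [hdiv, hdiv, hhalf]
  linarith
end

section
/- There exists q₀ ∈ (1, 2) such that for all q ∈ (1, q₀), (1 - (1/3)^{q-1})^{2/q} - 2·(1 - 2·(1/2)^q)^{2/q} > 0. -/
/-!
Put `t = q - 1`, so that `2 · (1/2)^q = (1/2)^t` and the claim reads
`2 · (1 - 2^{-t})^{2/q} < (1 - 3^{-t})^{2/q}`. As `t → 0⁺` the ratio `(1 - 3^{-t}) / (1 - 2^{-t})`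
tends to `log 3 / log 2 > 19/12`, and the elementary bounds `x / (1 + x) ≤ 1 - e^{-x} ≤ x` keep it
above `3/2` for `t ≤ 1/100`. Since `2/q > 7/4` and `(3/2)^{7/4} > 2`, the claim follows.
Both numerical facts rest on `2^19 < 3^12`, i.e. `log 3 / log 2 > 19/12`.
-/

open Real

lemma one_sub_exp_neg_le (x : ℝ) : 1 - exp (-x) ≤ x := by
  linarith [one_sub_le_exp_neg x]

lemma div_one_add_le_one_sub_exp_neg {x : ℝ} (hx : -1 < x) : x / (1 + x) ≤ 1 - exp (-x) := by
  have hpos : 0 < 1 + x := by linarith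
  have hexp : exp (-x) ≤ (1 + x)⁻¹ := by
    rw [exp_neg]
    exact inv_anti₀ hpos (by linarith [add_one_le_exp x])
  have hdiv : x / (1 + x) = 1 - (1 + x)⁻¹ := by
    field_simp
    ring
  linarith

lemma one_div_rpow_eq_exp {c : ℝ} (hc : 0 < c) (t : ℝ) : (1 / c) ^ t = exp (-(log c * t)) := by
  rw [rpow_def_of_pos (by positivity), one_div, log_inv, neg_mul]

lemma mul_one_sub_one_div_rpow_le {c d k t : ℝ} (hc : 0 < c) (hd : 1 ≤ d) (hk : 0 ≤ k)
    (ht : 0 ≤ t) (h : k * log c * (1 + log d * t) ≤ log d) :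
    k * (1 - (1 / c) ^ t) ≤ 1 - (1 / d) ^ t := by
  have hdt : 0 ≤ log d * t := mul_nonneg (log_nonneg hd) ht
  rw [one_div_rpow_eq_exp hc, one_div_rpow_eq_exp (by linarith)]
  calc k * (1 - exp (-(log c * t))) ≤ k * (log c * t) :=
        mul_le_mul_of_nonneg_left (one_sub_exp_neg_le _) hk
    _ ≤ log d * t / (1 + log d * t) := by
        rw [le_div_iff₀ (by linarith)]
        nlinarith [mul_le_mul_of_nonneg_right h ht]
    _ ≤ 1 - exp (-(log d * t)) := div_one_add_le_one_sub_exp_neg (by linarith)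

lemma nineteen_mul_log_two_lt_twelve_mul_log_three : 19 * log 2 < 12 * log 3 := by
  have h := log_lt_log (by norm_num) (show (2 : ℝ) ^ 19 < 3 ^ 12 by norm_num)
  simpa only [log_pow, Nat.cast_ofNat] using h

lemma three_halves_mul_one_sub_half_rpow_le {t : ℝ} (ht₀ : 0 ≤ t) (ht : t ≤ 1 / 100) :
    3 / 2 * (1 - (1 / 2 : ℝ) ^ t) ≤ 1 - (1 / 3) ^ t := by
  refine mul_one_sub_one_div_rpow_le (by norm_num) (by norm_num) (by norm_num) ht₀ ?_
  have hlog3 : log 3 ≤ 2 := by linarith [log_le_sub_one_of_pos (show (0 : ℝ) < 3 by norm_num)]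
  have hlog3t : log 3 * t ≤ 1 / 50 := by nlinarith [log_pos (show (1 : ℝ) < 3 by norm_num)]
  have hlog2 : 0 < log 2 := log_pos one_lt_two
  nlinarith [nineteen_mul_log_two_lt_twelve_mul_log_three, mul_le_mul_of_nonneg_left hlog3t hlog2.le]

lemma two_lt_three_halves_rpow {p : ℝ} (hp : 7 / 4 ≤ p) : 2 < (3 / 2 : ℝ) ^ p := by
  rw [lt_rpow_iff_log_lt (by norm_num) (by norm_num), log_div (by norm_num) (by norm_num)]
  have h := nineteen_mul_log_two_lt_twelve_mul_log_three
  have hlog2 : 0 < log 2 := log_pos one_lt_two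
  nlinarith [mul_le_mul_of_nonneg_right hp (show 0 ≤ log 3 - log 2 by linarith)]

lemma mul_rpow_lt_rpow_of_mul_le {a b c k p : ℝ} (hb : 0 < b) (hc : 0 ≤ c) (hp : 0 ≤ p)
    (hcb : c * b ≤ a) (hk : k < c ^ p) : k * b ^ p < a ^ p :=
  calc k * b ^ p < c ^ p * b ^ p := mul_lt_mul_of_pos_right hk (rpow_pos_of_pos hb p)
    _ = (c * b) ^ p := (mul_rpow hc hb.le).symm
    _ ≤ a ^ p := rpow_le_rpow (mul_nonneg hc hb.le) hcb hp

theorem antisym_state_monogamy_near_one :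
    ∃ q₀ : ℝ, 1 < q₀ ∧ q₀ < 2 ∧ ∀ q : ℝ, 1 < q → q < q₀ →
      0 < (1 - ((1:ℝ) / 3) ^ (q - 1)) ^ (2 / q)
          - 2 * (1 - 2 * ((1:ℝ) / 2) ^ q) ^ (2 / q) := by
  refine ⟨101 / 100, by norm_num, by norm_num, fun q hq₁ hq₀ => ?_⟩
  have hhalf : 2 * (1 / 2 : ℝ) ^ q = (1 / 2) ^ (q - 1) := by
    rw [rpow_sub (by norm_num), rpow_one]
    ring
  have hb : 0 < 1 - (1 / 2 : ℝ) ^ (q - 1) :=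
    sub_pos.2 (rpow_lt_one (by norm_num) (by norm_num) (by linarith))
  have hexp : 7 / 4 ≤ 2 / q := by
    rw [le_div_iff₀ (by linarith)]
    linarith
  rw [sub_pos, hhalf]
  exact mul_rpow_lt_rpow_of_mul_le hb (by norm_num) (by positivity)
    (three_halves_mul_one_sub_half_rpow_le (by linarith) (by linarith))
    (two_lt_three_halves_rpow hexp)
end
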